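/- arXiv:2004.07869 — 6 statements merged into one kernel-verified Lean document; each statement's English description precedes it below -/
import Mathlib

section
/- Fix d even, 0 < ε < 1, and t ≥ 1. For z ∈ {±1}^{d/2} define g^z : [d] → ℝ by g^z(x) = ε·(-1)^x·z_{⌈x/2⌉}. Then for every sequence x₁,…,x_{t-1} ∈ [d], E_{z ~ uniform on {±1}^{d/2}}[∏_{i=1}^{t-1}(1 + g^z(x_i))] ≥ (1 - ε²)^{(t-1)/2}. -/
/-!
Flipping every sign `z ↦ -z` pairs each summand `∏ (1 + g^z(x_i))` with `∏ (1 + g^{-z}(x_i))`,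
and since `g^{-z} = -g^z` and `(g^z)² = ε²`, the product of the two summands is `(1 - ε²)^(t-1)`.
By AM-GM each pair averages at least `(1 - ε²)^((t-1)/2)`, and the flip is a bijection of
`{±1}^{d/2}`, so the same bound holds for the whole average.
-/

/-- The `±1` value of coordinate `⌈x/2⌉` (1-based index `j`) of a sign vector encoded by
`s : Fin m → Bool`. -/
def pmSign (m : ℕ) (s : Fin m → Bool) (j : ℕ) : ℝ :=
  if h : j - 1 < m then (if s ⟨j - 1, h⟩ then 1 else -1) else 1

open Finset

theorem Fintype.card_mul_le_sum_of_sq_le_mul_involutive {α : Type*} [Fintype α] {f : α → ℝ}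
    {σ : α → α} (hσ : Function.Involutive σ) {c : ℝ} (hf : ∀ a, 0 ≤ f a)
    (hfσ : ∀ a, c ^ 2 ≤ f a * f (σ a)) :
    Fintype.card α * c ≤ ∑ a, f a := by
  have amgm : ∀ a, 2 * c ≤ f a + f (σ a) := fun a => by
    nlinarith [sq_nonneg (f a - f (σ a)), hfσ a, hf a, hf (σ a)]
  have hsum_σ : ∑ a, f (σ a) = ∑ a, f a := Equiv.sum_comp hσ.toPerm f
  have := sum_le_sum fun a (_ : a ∈ univ) => amgm a
  rw [sum_add_distrib, hsum_σ, ← mul_sum, sum_const, card_univ, nsmul_eq_mul] at this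
  linarith

section pmSign

variable {m : ℕ}

theorem pmSign_sq (s : Fin m → Bool) (j : ℕ) : pmSign m s j ^ 2 = 1 := by
  unfold pmSign
  split_ifs <;> norm_num

theorem pmSign_not (s : Fin m → Bool) {j : ℕ} (hj : j - 1 < m) :
    pmSign m (fun k => !s k) j = -pmSign m s j := by
  unfold pmSign
  rw [dif_pos hj, dif_pos hj]
  cases h : s ⟨j - 1, hj⟩ <;> simp [h]

theorem one_add_mul_pmSign_nonneg (s : Fin m → Bool) {a : ℝ} (ha : a ^ 2 ≤ 1) (j : ℕ) :
    0 ≤ 1 + a * pmSign m s j := by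
  nlinarith [pmSign_sq s j, sq_nonneg (a - pmSign m s j), sq_nonneg (a + pmSign m s j)]

variable {ι : Type*} (I : Finset ι) {a : ι → ℝ} {j : ι → ℕ}

theorem prod_one_add_mul_pmSign_mul_not (s : Fin m → Bool) (hj : ∀ i ∈ I, j i - 1 < m) :
    (∏ i ∈ I, (1 + a i * pmSign m s (j i))) * ∏ i ∈ I, (1 + a i * pmSign m (fun k => !s k) (j i))
      = ∏ i ∈ I, (1 - a i ^ 2) := by
  rw [← prod_mul_distrib]
  refine prod_congr rfl fun i hi => ?_
  rw [pmSign_not s (hj i hi)]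
  linear_combination (-a i ^ 2) * pmSign_sq s (j i)

theorem two_pow_mul_le_sum_prod_one_add_mul_pmSign {b c : ℝ} (ha : ∀ i ∈ I, a i ^ 2 = b)
    (hb : b ≤ 1) (hc : c ^ 2 ≤ (1 - b) ^ #I) (hj : ∀ i ∈ I, j i - 1 < m) :
    2 ^ m * c ≤ ∑ s : Fin m → Bool, ∏ i ∈ I, (1 + a i * pmSign m s (j i)) := by
  have hflip : Function.Involutive fun (s : Fin m → Bool) k => !s k := fun s => by simp
  have hprod_flip : ∀ s : Fin m → Bool, c ^ 2 ≤ (∏ i ∈ I, (1 + a i * pmSign m s (j i))) *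
      ∏ i ∈ I, (1 + a i * pmSign m (fun k => !s k) (j i)) := fun s => by
    rwa [prod_one_add_mul_pmSign_mul_not I s hj, prod_congr rfl fun i hi => by rw [ha i hi],
      prod_const]
  have hnonneg : ∀ s : Fin m → Bool, 0 ≤ ∏ i ∈ I, (1 + a i * pmSign m s (j i)) := fun s =>
    prod_nonneg fun i hi => one_add_mul_pmSign_nonneg s ((ha i hi).trans_le hb) _
  simpa using Fintype.card_mul_le_sum_of_sq_le_mul_involutive hflip hnonneg hprod_flip

end pmSign

theorem sq_rpow_half_sub_one {b : ℝ} (hb : 0 ≤ b) {t : ℕ} (ht : 1 ≤ t) :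
    (b ^ (((t : ℝ) - 1) / 2)) ^ 2 = b ^ (t - 1) := by
  rw [← Real.rpow_mul_natCast hb, ← Real.rpow_natCast, Nat.cast_sub ht]
  norm_num

theorem stmt4_general (d t : ℕ) (hd : 2 ∣ d) (ht : 1 ≤ t)
    (ε : ℝ) (hε0 : 0 < ε) (hε1 : ε < 1) (x : ℕ → ℕ) (hx : ∀ i, x i ∈ Finset.Icc 1 d) :
    (∑ s : Fin (d / 2) → Bool, ∏ i ∈ Finset.range (t - 1),
        (1 + ε * (-1) ^ (x i) * pmSign (d / 2) s ((x i + 1) / 2))) / 2 ^ (d / 2)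
      ≥ (1 - ε ^ 2) ^ (((t : ℝ) - 1) / 2) := by
  have hidx : ∀ i ∈ range (t - 1), (x i + 1) / 2 - 1 < d / 2 := fun i _ => by
    have := mem_Icc.mp (hx i)
    omega
  have hcoeff : ∀ i ∈ range (t - 1), (ε * (-1) ^ x i) ^ 2 = ε ^ 2 := fun i _ => by
    rw [mul_pow, ← pow_mul, pow_mul', neg_one_sq, one_pow, mul_one]
  have hε_sq : ε ^ 2 ≤ 1 := by nlinarith
  have hrpow_sq : ((1 - ε ^ 2) ^ (((t : ℝ) - 1) / 2)) ^ 2 = (1 - ε ^ 2) ^ #(range (t - 1)) := by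
    rw [card_range, sq_rpow_half_sub_one (by linarith) ht]
  rw [ge_iff_le, le_div_iff₀ (by positivity), mul_comm]
  exact two_pow_mul_le_sum_prod_one_add_mul_pmSign _ hcoeff hε_sq hrpow_sq.le hidx

/-- For every fixed transcript `x₁,…,x_{t-1} ∈ [d]`,
`E_{z ~ {±1}^{d/2}}[∏_{i<t}(1 + g^z(x_i))] ≥ (1-ε²)^{(t-1)/2}`,
where `g^z(x) = ε·(-1)^x·z_{⌈x/2⌉}`. -/
theorem stmt4 (d t : ℕ) (hd : 2 ∣ d) (hd0 : 0 < d) (ht : 1 ≤ t)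
    (ε : ℝ) (hε0 : 0 < ε) (hε1 : ε < 1) (x : ℕ → ℕ) (hx : ∀ i, x i ∈ Finset.Icc 1 d) :
    (∑ s : Fin (d / 2) → Bool, ∏ i ∈ Finset.range (t - 1),
        (1 + ε * (-1) ^ (x i) * pmSign (d / 2) s ((x i + 1) / 2))) / 2 ^ (d / 2)
      ≥ (1 - ε ^ 2) ^ (((t : ℝ) - 1) / 2) :=
  stmt4_general d t hd ht ε hε0 hε1 x hx
end

section
/- Let Ω be a finite set, N ∈ ℕ, and for each t ∈ [N] let q_t be a probability distribution on Ω with full support. Let Z be a finite index set with distribution D, and for each ζ ∈ Z and t ∈ [N] let g^ζ_t : Ω → ℝ satisfy E_{x ~ q_t}[g^ζ_t(x)] = 0 and 1 + g^ζ_t(x) ≥ 0 for all x. Define P₀ = q₁ ⊗ ⋯ ⊗ q_N, and P₁ the mixture over ζ ~ D of the product distributions whose t-th factor has density (1 + g^ζ_t(x))·q_t(x). Then χ²(P₁‖P₀) = E_{ζ,ζ' ~ D iid}[∏_{t=1}^N (1 + E_{x ~ q_t}[g^ζ_t(x)·g^{ζ'}_t(x)])] − 1. -/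
/-- Exact formula for the χ²-divergence between a mixture of perturbed product
distributions and the base product distribution. -/
theorem stmt7 {Ω Z : Type*} [Fintype Ω] [Fintype Z] (N : ℕ)
    (q : Fin N → Ω → ℝ) (hq0 : ∀ t x, 0 < q t x) (hq1 : ∀ t, ∑ x, q t x = 1)
    (D : Z → ℝ) (hD0 : ∀ ζ, 0 ≤ D ζ) (hD1 : ∑ ζ, D ζ = 1)
    (g : Z → Fin N → Ω → ℝ)
    (hmean : ∀ ζ t, ∑ x, q t x * g ζ t x = 0)
    (hpos : ∀ ζ t x, 0 ≤ 1 + g ζ t x) :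
    ∑ x : Fin N → Ω, (∏ t, q t (x t)) *
        ((∑ ζ, D ζ * ∏ t, q t (x t) * (1 + g ζ t (x t))) / (∏ t, q t (x t)) - 1) ^ 2
      = (∑ ζ, ∑ ζ', D ζ * D ζ' *
          ∏ t, (1 + ∑ ω, q t ω * (g ζ t ω * g ζ' t ω))) - 1 := by
  classical
  have swap : ∀ f : Fin N → Ω → ℝ,
      ∑ x : Fin N → Ω, ∏ t, f t (x t) = ∏ t, ∑ ω, f t ω := by
    intro f
    rw [← Fintype.piFinset_univ, ← Finset.prod_univ_sum]
  set m : (Fin N → Ω) → ℝ := fun x => ∑ ζ, D ζ * ∏ t, (1 + g ζ t (x t)) with hm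
  have hPpos : ∀ x : Fin N → Ω, (0:ℝ) < ∏ t, q t (x t) :=
    fun x => Finset.prod_pos fun t _ => hq0 t (x t)
  have hquot : ∀ x : Fin N → Ω,
      (∑ ζ, D ζ * ∏ t, q t (x t) * (1 + g ζ t (x t))) / (∏ t, q t (x t)) = m x := by
    intro x
    have h : (∑ ζ, D ζ * ∏ t, q t (x t) * (1 + g ζ t (x t)))
        = (∏ t, q t (x t)) * m x := by
      rw [hm, Finset.mul_sum]
      refine Finset.sum_congr rfl fun ζ _ => ?_
      rw [Finset.prod_mul_distrib]; ring
    rw [h, mul_div_cancel_left₀ _ (hPpos x).ne']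
  simp_rw [hquot]
  have expand : ∀ x : Fin N → Ω,
      (∏ t, q t (x t)) * (m x - 1) ^ 2
        = (∑ ζ, ∑ ζ', D ζ * D ζ' *
              ∏ t, (q t (x t) * ((1 + g ζ t (x t)) * (1 + g ζ' t (x t)))))
          - 2 * (∑ ζ, D ζ * ∏ t, (q t (x t) * (1 + g ζ t (x t))))
          + ∏ t, q t (x t) := by
    intro x
    have hmul : ∀ ζ ζ' : Z,
        ∏ t, (q t (x t) * ((1 + g ζ t (x t)) * (1 + g ζ' t (x t))))
          = (∏ t, q t (x t)) * ((∏ t, (1 + g ζ t (x t))) * ∏ t, (1 + g ζ' t (x t))) := by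
      intro ζ ζ'
      rw [Finset.prod_mul_distrib, Finset.prod_mul_distrib]
    have hmul1 : ∀ ζ : Z,
        ∏ t, (q t (x t) * (1 + g ζ t (x t)))
          = (∏ t, q t (x t)) * ∏ t, (1 + g ζ t (x t)) := by
      intro ζ; rw [Finset.prod_mul_distrib]
    have e2 : ∑ ζ, ∑ ζ', D ζ * D ζ' *
          ((∏ t, q t (x t)) * ((∏ t, (1 + g ζ t (x t))) * ∏ t, (1 + g ζ' t (x t))))
        = (∏ t, q t (x t)) * ((∑ ζ, D ζ * ∏ t, (1 + g ζ t (x t))) *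
            (∑ ζ, D ζ * ∏ t, (1 + g ζ t (x t)))) := by
      rw [Finset.sum_mul_sum, Finset.mul_sum]
      refine Finset.sum_congr rfl fun ζ _ => ?_
      rw [Finset.mul_sum]
      exact Finset.sum_congr rfl fun ζ' _ => by ring
    have e3 : ∑ ζ, D ζ * ((∏ t, q t (x t)) * ∏ t, (1 + g ζ t (x t)))
        = (∏ t, q t (x t)) * ∑ ζ, D ζ * ∏ t, (1 + g ζ t (x t)) := by
      rw [Finset.mul_sum]; exact Finset.sum_congr rfl fun ζ _ => by ring
    simp_rw [hmul, hmul1, hm]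
    rw [e2, e3]; ring
  simp_rw [expand]
  rw [Finset.sum_add_distrib, Finset.sum_sub_distrib]
  have hB : ∑ x : Fin N → Ω, 2 * (∑ ζ, D ζ * ∏ t, (q t (x t) * (1 + g ζ t (x t)))) = 2 := by
    simp_rw [Finset.mul_sum]
    rw [Finset.sum_comm]
    have : ∀ ζ : Z, ∑ x : Fin N → Ω, 2 * (D ζ * ∏ t, (q t (x t) * (1 + g ζ t (x t))))
        = 2 * D ζ := by
      intro ζ
      rw [← Finset.mul_sum, ← Finset.mul_sum, swap fun t ω => q t ω * (1 + g ζ t ω)]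
      have h1 : ∀ t : Fin N, ∑ ω, q t ω * (1 + g ζ t ω) = 1 := by
        intro t
        simp_rw [mul_add, mul_one, Finset.sum_add_distrib, hq1, hmean]
        norm_num
      simp [h1]
    simp_rw [this, ← Finset.mul_sum, hD1, mul_one]
  have hC : ∑ x : Fin N → Ω, ∏ t, q t (x t) = 1 := by
    rw [swap q]; simp [hq1]
  have hA : ∑ x : Fin N → Ω, (∑ ζ, ∑ ζ', D ζ * D ζ' *
        ∏ t, (q t (x t) * ((1 + g ζ t (x t)) * (1 + g ζ' t (x t)))))
      = ∑ ζ, ∑ ζ', D ζ * D ζ' * ∏ t, (1 + ∑ ω, q t ω * (g ζ t ω * g ζ' t ω)) := by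
    rw [Finset.sum_comm]
    refine Finset.sum_congr rfl fun ζ _ => ?_
    rw [Finset.sum_comm]
    refine Finset.sum_congr rfl fun ζ' _ => ?_
    rw [← Finset.mul_sum, swap fun t ω => q t ω * ((1 + g ζ t ω) * (1 + g ζ' t ω))]
    congr 1
    refine Finset.prod_congr rfl fun t _ => ?_
    have h : ∀ ω, q t ω * ((1 + g ζ t ω) * (1 + g ζ' t ω))
        = q t ω + q t ω * g ζ t ω + q t ω * g ζ' t ω + q t ω * (g ζ t ω * g ζ' t ω) := by
      intro ω; ring
    simp_rw [h, Finset.sum_add_distrib, hq1, hmean]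
    ring
  rw [hA, hB, hC]
  ring
end

section
/- In the setting of the previous mixture construction, χ²(P₁‖P₀) ≤ max_{t ∈ [N]} E_{ζ,ζ' ~ D iid}[(1 + E_{x ~ q_t}[g^ζ_t(x)·g^{ζ'}_t(x)])^N] − 1. -/
open Finset

private lemma amgm_pow {N : ℕ} (hN : 0 < N) (a : Fin N → ℝ) (ha : ∀ t, 0 ≤ a t) :
    ∏ t, a t ≤ (∑ t, a t ^ N) / N := by
  have hNR : (0:ℝ) < N := by exact_mod_cast hN
  have hw' : ∑ _i : Fin N, (N:ℝ)⁻¹ = 1 := by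
    rw [Finset.sum_const, Finset.card_univ, Fintype.card_fin, nsmul_eq_mul]
    field_simp
  have key := Real.geom_mean_le_arith_mean_weighted Finset.univ
      (fun _ : Fin N => (N:ℝ)⁻¹) (fun t => a t ^ N)
      (fun i _ => inv_nonneg.mpr (Nat.cast_nonneg N))
      hw'
      (fun i _ => pow_nonneg (ha i) N)
  have hL : ∀ t : Fin N, (a t ^ N) ^ ((N:ℝ)⁻¹) = a t := by
    intro t
    rw [← Real.rpow_natCast (a t) N, ← Real.rpow_mul (ha t),
      mul_inv_cancel₀ hNR.ne', Real.rpow_one]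
  calc ∏ t, a t = ∏ t, (a t ^ N) ^ ((N:ℝ)⁻¹) :=
        (Finset.prod_congr rfl fun t _ => hL t).symm
    _ ≤ ∑ t, (N:ℝ)⁻¹ * a t ^ N := key
    _ = (∑ t, a t ^ N) / N := by
        rw [← Finset.mul_sum]; field_simp

/-- Hölder bound: the χ²-divergence between the mixture of perturbed product
distributions and the base product distribution is at most
`max_t E_{ζ,ζ'}[(1 + E_{x~q_t}[g^ζ_t(x)·g^{ζ'}_t(x)])^N] − 1`. -/
theorem stmt8 {Ω Z : Type*} [Fintype Ω] [Fintype Z] (N : ℕ) (hN : 0 < N)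
    (q : Fin N → Ω → ℝ) (hq0 : ∀ t x, 0 < q t x) (hq1 : ∀ t, ∑ x, q t x = 1)
    (D : Z → ℝ) (hD0 : ∀ ζ, 0 ≤ D ζ) (hD1 : ∑ ζ, D ζ = 1)
    (g : Z → Fin N → Ω → ℝ)
    (hmean : ∀ ζ t, ∑ x, q t x * g ζ t x = 0)
    (hpos : ∀ ζ t x, 0 ≤ 1 + g ζ t x) :
    ∑ x : Fin N → Ω, (∏ t, q t (x t)) *
        ((∑ ζ, D ζ * ∏ t, q t (x t) * (1 + g ζ t (x t))) / (∏ t, q t (x t)) - 1) ^ 2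
      ≤ (Finset.univ.sup' ⟨⟨0, hN⟩, Finset.mem_univ _⟩ fun t : Fin N =>
          ∑ ζ, ∑ ζ', D ζ * D ζ' * (1 + ∑ ω, q t ω * (g ζ t ω * g ζ' t ω)) ^ N) - 1 := by
  classical
  have hpi : ∀ h : Fin N → Ω → ℝ,
      ∑ x : Fin N → Ω, ∏ t, h t (x t) = ∏ t, ∑ ω, h t ω := by
    intro h
    rw [Finset.prod_univ_sum, Fintype.piFinset_univ]
  set P : (Fin N → Ω) → ℝ := fun x => ∏ t, q t (x t) with hP
  have hPpos : ∀ x, 0 < P x := fun x => Finset.prod_pos fun t _ => hq0 t (x t)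
  set f : Z → Fin N → Ω → ℝ := fun ζ t ω => q t ω * (1 + g ζ t ω) with hf
  have hfnn : ∀ ζ t ω, 0 ≤ f ζ t ω := fun ζ t ω =>
    mul_nonneg (hq0 t ω).le (hpos ζ t ω)
  have hfsum : ∀ ζ t, ∑ ω, f ζ t ω = 1 := by
    intro ζ t
    simp only [hf, mul_add, mul_one]
    rw [Finset.sum_add_distrib, hq1, hmean, add_zero]
  set c : Z → Z → Fin N → ℝ := fun ζ ζ' t => ∑ ω, q t ω * (g ζ t ω * g ζ' t ω) with hc
  have hcsum : ∀ ζ ζ' t, ∑ ω, f ζ t ω * f ζ' t ω / q t ω = 1 + c ζ ζ' t := by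
    intro ζ ζ' t
    have he : ∀ ω, f ζ t ω * f ζ' t ω / q t ω
        = q t ω + q t ω * g ζ t ω + q t ω * g ζ' t ω + q t ω * (g ζ t ω * g ζ' t ω) := by
      intro ω
      have hq := (hq0 t ω).ne'
      field_simp [hf]
      ring
    rw [Finset.sum_congr rfl fun ω _ => he ω]
    simp only [Finset.sum_add_distrib, hq1, hmean, hc, add_zero]
  have hcnn : ∀ ζ ζ' t, 0 ≤ 1 + c ζ ζ' t := by
    intro ζ ζ' t
    rw [← hcsum]
    exact Finset.sum_nonneg fun ω _ =>
      div_nonneg (mul_nonneg (hfnn ζ t ω) (hfnn ζ' t ω)) (hq0 t ω).le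
  set S : (Fin N → Ω) → ℝ := fun x => ∑ ζ, D ζ * ∏ t, f ζ t (x t) with hS
  -- sum of P = 1
  have hsumP : ∑ x : Fin N → Ω, P x = 1 := by
    show ∑ x : Fin N → Ω, ∏ t, q t (x t) = 1
    rw [hpi]
    simp [hq1]
  -- sum of S = 1
  have hsumS : ∑ x : Fin N → Ω, S x = 1 := by
    show ∑ x : Fin N → Ω, ∑ ζ, D ζ * ∏ t, f ζ t (x t) = 1
    rw [Finset.sum_comm]
    rw [Finset.sum_congr rfl fun ζ _ => (Finset.mul_sum _ _ _).symm]
    have h1 : ∀ ζ : Z, ∑ x : Fin N → Ω, ∏ t, f ζ t (x t) = 1 := by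
      intro ζ
      rw [hpi]
      simp [hfsum]
    simp only [h1, mul_one, hD1]
  -- sum of S^2 / P = T
  have hsumT : ∑ x : Fin N → Ω, S x ^ 2 / P x
      = ∑ ζ, ∑ ζ', D ζ * D ζ' * ∏ t, (1 + c ζ ζ' t) := by
    have hx : ∀ x : Fin N → Ω, S x ^ 2 / P x
        = ∑ ζ, ∑ ζ', D ζ * D ζ' * ∏ t, (f ζ t (x t) * f ζ' t (x t) / q t (x t)) := by
      intro x
      rw [sq, hS, Finset.sum_mul_sum]
      rw [Finset.sum_div]
      refine Finset.sum_congr rfl fun ζ _ => ?_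
      rw [Finset.sum_div]
      refine Finset.sum_congr rfl fun ζ' _ => ?_
      have he : (D ζ * ∏ t, f ζ t (x t)) * (D ζ' * ∏ t, f ζ' t (x t))
          = D ζ * D ζ' * ((∏ t, f ζ t (x t)) * ∏ t, f ζ' t (x t)) := by ring
      rw [he, ← Finset.prod_mul_distrib, mul_div_assoc, hP, ← Finset.prod_div_distrib]
    rw [Finset.sum_congr rfl fun x _ => hx x, Finset.sum_comm]
    refine Finset.sum_congr rfl fun ζ _ => ?_
    rw [Finset.sum_comm]
    refine Finset.sum_congr rfl fun ζ' _ => ?_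
    rw [← Finset.mul_sum]
    congr 1
    exact (hpi _).trans (Finset.prod_congr rfl fun t _ => hcsum ζ ζ' t)
  -- pointwise expansion
  have hpt : ∀ x : Fin N → Ω, P x * (S x / P x - 1) ^ 2 = S x ^ 2 / P x - 2 * S x + P x := by
    intro x
    have h := (hPpos x).ne'
    field_simp
    ring
  have hLHS : ∑ x : Fin N → Ω, P x * (S x / P x - 1) ^ 2
      = (∑ ζ, ∑ ζ', D ζ * D ζ' * ∏ t, (1 + c ζ ζ' t)) - 1 := by
    rw [Finset.sum_congr rfl fun x _ => hpt x]
    rw [Finset.sum_add_distrib, Finset.sum_sub_distrib, hsumT, hsumP,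
      ← Finset.mul_sum, hsumS]
    ring
  -- final Hölder / AM-GM step
  have hMle : ∀ t : Fin N, ∑ ζ, ∑ ζ', D ζ * D ζ' * (1 + c ζ ζ' t) ^ N
      ≤ Finset.univ.sup' ⟨⟨0, hN⟩, Finset.mem_univ _⟩
        (fun t : Fin N => ∑ ζ, ∑ ζ', D ζ * D ζ' * (1 + c ζ ζ' t) ^ N) :=
    fun t => Finset.le_sup'
      (fun t : Fin N => ∑ ζ, ∑ ζ', D ζ * D ζ' * (1 + c ζ ζ' t) ^ N) (Finset.mem_univ t)
  have key : ∑ ζ, ∑ ζ', D ζ * D ζ' * ∏ t, (1 + c ζ ζ' t)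
      ≤ Finset.univ.sup' ⟨⟨0, hN⟩, Finset.mem_univ _⟩
        (fun t : Fin N => ∑ ζ, ∑ ζ', D ζ * D ζ' * (1 + c ζ ζ' t) ^ N) := by
    have step1 : ∑ ζ, ∑ ζ', D ζ * D ζ' * ∏ t, (1 + c ζ ζ' t)
        ≤ ∑ ζ, ∑ ζ', D ζ * D ζ' * ((∑ t, (1 + c ζ ζ' t) ^ N) / N) := by
      refine Finset.sum_le_sum fun ζ _ => Finset.sum_le_sum fun ζ' _ => ?_
      exact mul_le_mul_of_nonneg_left
        (amgm_pow hN _ (fun t => hcnn ζ ζ' t))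
        (mul_nonneg (hD0 ζ) (hD0 ζ'))
    refine step1.trans ?_
    have hswap : (∑ t : Fin N, ∑ ζ, ∑ ζ', D ζ * D ζ' * (1 + c ζ ζ' t) ^ N)
        = ∑ ζ, ∑ ζ', ∑ t : Fin N, D ζ * D ζ' * (1 + c ζ ζ' t) ^ N := by
      rw [Finset.sum_comm]
      exact Finset.sum_congr rfl fun ζ _ => by rw [Finset.sum_comm]
    have hre : ∑ ζ, ∑ ζ', D ζ * D ζ' * ((∑ t, (1 + c ζ ζ' t) ^ N) / N)
        = (∑ t, ∑ ζ, ∑ ζ', D ζ * D ζ' * (1 + c ζ ζ' t) ^ N) / N := by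
      rw [hswap, Finset.sum_div]
      refine Finset.sum_congr rfl fun ζ _ => ?_
      rw [Finset.sum_div]
      refine Finset.sum_congr rfl fun ζ' _ => ?_
      rw [← mul_div_assoc, Finset.mul_sum]
    rw [hre]
    have hNR : (0:ℝ) < N := by exact_mod_cast hN
    rw [div_le_iff₀ hNR]
    calc ∑ t : Fin N, ∑ ζ, ∑ ζ', D ζ * D ζ' * (1 + c ζ ζ' t) ^ N
        ≤ ∑ _t : Fin N, Finset.univ.sup' ⟨⟨0, hN⟩, Finset.mem_univ _⟩
            (fun t : Fin N => ∑ ζ, ∑ ζ', D ζ * D ζ' * (1 + c ζ ζ' t) ^ N) :=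
          Finset.sum_le_sum fun t _ => hMle t
      _ = _ * N := by
          rw [Finset.sum_const, Finset.card_univ, Fintype.card_fin, nsmul_eq_mul]
          ring
  calc ∑ x : Fin N → Ω, (∏ t, q t (x t)) *
        ((∑ ζ, D ζ * ∏ t, q t (x t) * (1 + g ζ t (x t))) / (∏ t, q t (x t)) - 1) ^ 2
      = ∑ x : Fin N → Ω, P x * (S x / P x - 1) ^ 2 := rfl
    _ = (∑ ζ, ∑ ζ', D ζ * D ζ' * ∏ t, (1 + c ζ ζ' t)) - 1 := hLHS
    _ ≤ _ := sub_le_sub_right key 1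
end

section
/- Let Ω be a finite set and P₀, P₁ probability distributions on Ω^N with P₀ = q₁ ⊗ ⋯ ⊗ q_N a product measure of full-support distributions. Suppose P₁ is the mixture over ζ ~ D of distributions P₁|ζ whose density with respect to P₀ at x_{≤t} factorizes as ∏_{i=1}^t (1 + g^ζ_{x_{<i}}(x_i)), where each g^ζ_{x_{<i}} : Ω → ℝ satisfies E_{x ~ p₀(·|x_{<i})}[g^ζ_{x_{<i}}(x)] = 0. Then KL(P₁‖P₀) ≤ Σ_{t=1}^N E_{x_{<t} ~ P₀}[(1/Δ(x_{<t}))·E_{ζ,ζ' ~ D iid}[φ^{ζ,ζ'}_{x_{<t}}·Ψ^{ζ,ζ'}_{x_{<t}}]], where Δ(x_{<t}) = E_ζ[∏_{i<t}(1+g^ζ_{x_{<i}}(x_i))], φ^{ζ,ζ'}_{x_{<t}} = E_{x ~ p₀(·|x_{<t})}[g^ζ_{x_{<t}}(x)·g^{ζ'}_{x_{<t}}(x)], and Ψ^{ζ,ζ'}_{x_{<t}} = ∏_{i<t}(1+g^ζ_{x_{<i}}(x_i))(1+g^{ζ'}_{x_{<i}}(x_i)). -/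
/-!
`Δ_k(x) = E_ζ ∏_{i<k} (1 + g^ζ_{x_{<i}}(x_i))` is the density of `P₁` with respect to `P₀` on
the first `k` coordinates, and it is a `P₀`-martingale because every factor has conditional mean
one. Telescoping `log Δ_N = Σ_t (log Δ_{t+1} - log Δ_t)` and replacing `Δ_N` by `Δ_{t+1}` turns
`KL(P₁‖P₀) = E₀[Δ_N log Δ_N]` into a sum of conditional divergences
`E₀[Δ_{t+1} log (Δ_{t+1} / Δ_t)]`. Each is at most the conditional `χ²` divergence
`E₀[Δ_{t+1}² / Δ_t] - 1`, and averaging `Δ_{t+1}² = E_{ζ,ζ'}[Ψ (1 + g^ζ(x_t)) (1 + g^{ζ'}(x_t))]`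
over `x_t ~ q_t` gives `Δ_t² + E_{ζ,ζ'}[φ Ψ]`.
-/

open Finset Function

section ProductWeight

variable {ι Ω : Type*} [Fintype ι] [DecidableEq ι] (q : ι → Ω → ℝ)

lemma prod_apply_update_mul (x : ι → Ω) (s : ι) (ω : Ω) :
    (∏ i, q i (update x s ω i)) * q s (x s) = (∏ i, q i (x i)) * q s ω := by
  have hcompl : ∏ i ∈ {s}ᶜ, q i (update x s ω i) = ∏ i ∈ {s}ᶜ, q i (x i) :=
    prod_congr rfl fun i hi => by rw [update_of_ne (by simpa using hi)]
  rw [Fintype.prod_eq_mul_prod_compl s, Fintype.prod_eq_mul_prod_compl s (fun i => q i (x i)),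
    hcompl, update_self]
  ring

variable [Fintype Ω]

lemma sum_prod_mul_eq_sum_prod_mul_sum_update {s : ι} (hq : ∑ ω, q s ω = 1)
    (h : (ι → Ω) → ℝ) :
    ∑ x, (∏ i, q i (x i)) * h x = ∑ x, (∏ i, q i (x i)) * ∑ ω, q s ω * h (update x s ω) := by
  let σ : Equiv.Perm ((ι → Ω) × Ω) := Involutive.toPerm (fun p => (update p.1 s p.2, p.1 s))
    fun p => by simp
  let F : (ι → Ω) × Ω → ℝ := fun p => (∏ i, q i (p.1 i)) * q s p.2 * h p.1
  calc ∑ x, (∏ i, q i (x i)) * h x = ∑ x, ∑ ω, F (x, ω) :=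
        sum_congr rfl fun x _ => by simp only [F]; rw [← sum_mul, ← mul_sum, hq, mul_one]
    _ = ∑ p, F (σ p) := by rw [Equiv.sum_comp σ F, Fintype.sum_prod_type]
    _ = ∑ x, (∏ i, q i (x i)) * ∑ ω, q s ω * h (update x s ω) := by
        rw [Fintype.sum_prod_type]
        refine sum_congr rfl fun x _ => ?_
        rw [mul_sum]
        refine sum_congr rfl fun ω _ => ?_
        change (∏ i, q i (update x s ω i)) * q s (x s) * h (update x s ω) = _
        rw [prod_apply_update_mul]
        ring

lemma sum_prod_eq_one (hq : ∀ i, ∑ ω, q i ω = 1) : ∑ x : ι → Ω, ∏ i, q i (x i) = 1 := by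
  rw [← Fintype.prod_sum]
  simp [hq]

end ProductWeight

section MixtureMoments

variable {Ω Z : Type*} [Fintype Ω] [Fintype Z] {p : Ω → ℝ} (a : Z → ℝ) {h : Z → Ω → ℝ}

lemma sum_mul_sum_mul_one_add (hp : ∑ ω, p ω = 1) (hh : ∀ ζ, ∑ ω, p ω * h ζ ω = 0) :
    ∑ ω, p ω * ∑ ζ, a ζ * (1 + h ζ ω) = ∑ ζ, a ζ := by
  simp_rw [mul_sum]
  rw [sum_comm]
  refine sum_congr rfl fun ζ _ => ?_
  calc ∑ ω, p ω * (a ζ * (1 + h ζ ω)) = a ζ * (∑ ω, p ω + ∑ ω, p ω * h ζ ω) := by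
        rw [← sum_add_distrib, mul_sum]
        exact sum_congr rfl fun ω _ => by ring
    _ = a ζ := by rw [hp, hh, add_zero, mul_one]

lemma sum_mul_sq_sum_mul_one_add (hp : ∑ ω, p ω = 1) (hh : ∀ ζ, ∑ ω, p ω * h ζ ω = 0) :
    ∑ ω, p ω * (∑ ζ, a ζ * (1 + h ζ ω)) ^ 2
      = (∑ ζ, a ζ) ^ 2 + ∑ ζ, ∑ ζ', a ζ * a ζ' * ∑ ω, p ω * (h ζ ω * h ζ' ω) := by
  have hpair : ∀ ζ ζ', ∑ ω, p ω * ((1 + h ζ ω) * (1 + h ζ' ω))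
      = 1 + ∑ ω, p ω * (h ζ ω * h ζ' ω) := fun ζ ζ' => by
    calc ∑ ω, p ω * ((1 + h ζ ω) * (1 + h ζ' ω))
        = ∑ ω, (p ω + p ω * h ζ ω + p ω * h ζ' ω + p ω * (h ζ ω * h ζ' ω)) :=
          sum_congr rfl fun ω _ => by ring
      _ = 1 + ∑ ω, p ω * (h ζ ω * h ζ' ω) := by
          rw [sum_add_distrib, sum_add_distrib, sum_add_distrib, hp, hh, hh, add_zero, add_zero]
  calc ∑ ω, p ω * (∑ ζ, a ζ * (1 + h ζ ω)) ^ 2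
      = ∑ ζ, ∑ ζ', a ζ * a ζ' * ∑ ω, p ω * ((1 + h ζ ω) * (1 + h ζ' ω)) := by
        simp_rw [sq, sum_mul_sum, mul_sum]
        rw [sum_comm]
        refine sum_congr rfl fun ζ _ => ?_
        rw [sum_comm]
        exact sum_congr rfl fun ζ' _ => sum_congr rfl fun ω _ => by ring
    _ = (∑ ζ, a ζ) ^ 2 + ∑ ζ, ∑ ζ', a ζ * a ζ' * ∑ ω, p ω * (h ζ ω * h ζ' ω) := by
        simp_rw [hpair, sq, sum_mul_sum, ← sum_add_distrib, mul_add, mul_one]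

end MixtureMoments

section PrefixLikelihood

variable {Ω Z : Type*} {N : ℕ}

lemma take_ofFn_update (x : Fin N → Ω) {s : Fin N} (ω : Ω) {k : ℕ} (hk : k ≤ s) :
    (List.ofFn (update x s ω)).take k = (List.ofFn x).take k := by
  refine List.ext_getElem (by simp) fun i hi _ => ?_
  simp only [List.length_take, List.length_ofFn, lt_inf_iff] at hi
  simp only [List.getElem_take, List.getElem_ofFn]
  have hne : (⟨i, hi.2⟩ : Fin N) ≠ s := Fin.ne_of_val_ne (by dsimp only; omega)
  exact update_of_ne hne ω x

/-- `prefixLR g ζ x k` is the density of `P₁|ζ` with respect to `P₀` on the first `k`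
coordinates, and `mixtureLR D g x k` is the paper's `Δ(x_{<k})`. -/
def prefixLR (g : Z → Fin N → List Ω → Ω → ℝ) (ζ : Z) (x : Fin N → Ω) (k : ℕ) : ℝ :=
  ∏ i ∈ univ.filter (fun i : Fin N => (i : ℕ) < k), (1 + g ζ i ((List.ofFn x).take i) (x i))

def mixtureLR [Fintype Z] (D : Z → ℝ) (g : Z → Fin N → List Ω → Ω → ℝ) (x : Fin N → Ω)
    (k : ℕ) : ℝ :=
  ∑ ζ, D ζ * prefixLR g ζ x k

variable (g : Z → Fin N → List Ω → Ω → ℝ)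

lemma prefixLR_update (ζ : Z) (x : Fin N → Ω) {s : Fin N} (ω : Ω) {k : ℕ} (hk : k ≤ s) :
    prefixLR g ζ (update x s ω) k = prefixLR g ζ x k := by
  refine prod_congr rfl fun i hi => ?_
  have his : (i : ℕ) < s := lt_of_lt_of_le (by simpa using hi) hk
  rw [take_ofFn_update x ω his.le, update_of_ne (Fin.ne_of_val_ne his.ne)]

lemma prefixLR_update_succ (ζ : Z) (x : Fin N → Ω) (s : Fin N) (ω : Ω) :
    prefixLR g ζ (update x s ω) (s + 1)
      = prefixLR g ζ x s * (1 + g ζ s ((List.ofFn x).take s) ω) := by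
  have hfilter : univ.filter (fun i : Fin N => (i : ℕ) < s + 1)
      = insert s (univ.filter (fun i : Fin N => (i : ℕ) < s)) := by
    ext i
    simp only [mem_filter, mem_univ, true_and, mem_insert, Fin.ext_iff]
    omega
  rw [prefixLR, hfilter, prod_insert (by simp), mul_comm, update_self,
    take_ofFn_update x ω le_rfl]
  exact congrArg (· * _) (prefixLR_update g ζ x ω le_rfl)

lemma prefixLR_nonneg (hpos : ∀ ζ t xs ω, 0 ≤ 1 + g ζ t xs ω) (ζ : Z) (x : Fin N → Ω) (k : ℕ) :
    0 ≤ prefixLR g ζ x k :=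
  prod_nonneg fun i _ => hpos ζ i _ (x i)

lemma prefixLR_of_le (ζ : Z) (x : Fin N → Ω) {k : ℕ} (hk : N ≤ k) :
    prefixLR g ζ x k = ∏ i, (1 + g ζ i ((List.ofFn x).take i) (x i)) := by
  rw [prefixLR, filter_true_of_mem fun i _ => lt_of_lt_of_le i.isLt hk]

variable [Fintype Z] (D : Z → ℝ)

lemma mixtureLR_zero (hD1 : ∑ ζ, D ζ = 1) (x : Fin N → Ω) : mixtureLR D g x 0 = 1 := by
  simp [mixtureLR, prefixLR, hD1]

lemma log_mixtureLR_eq_sum_sub (hD1 : ∑ ζ, D ζ = 1) (x : Fin N → Ω) :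
    Real.log (mixtureLR D g x N)
      = ∑ t : Fin N, (Real.log (mixtureLR D g x (t + 1)) - Real.log (mixtureLR D g x t)) := by
  rw [Fin.sum_univ_eq_sum_range (fun k => Real.log (mixtureLR D g x (k + 1))
    - Real.log (mixtureLR D g x k)), sum_range_sub (fun k => Real.log (mixtureLR D g x k)),
    mixtureLR_zero g D hD1, Real.log_one, sub_zero]

lemma mixtureLR_nonneg (hD0 : ∀ ζ, 0 ≤ D ζ) (hpos : ∀ ζ t xs ω, 0 ≤ 1 + g ζ t xs ω)
    (x : Fin N → Ω) (k : ℕ) : 0 ≤ mixtureLR D g x k :=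
  sum_nonneg fun ζ _ => mul_nonneg (hD0 ζ) (prefixLR_nonneg g hpos ζ x k)

lemma mixtureLR_update (x : Fin N → Ω) {s : Fin N} (ω : Ω) {k : ℕ} (hk : k ≤ s) :
    mixtureLR D g (update x s ω) k = mixtureLR D g x k := by
  simp only [mixtureLR, prefixLR_update g _ x ω hk]

lemma mixtureLR_update_succ (x : Fin N → Ω) (s : Fin N) (ω : Ω) :
    mixtureLR D g (update x s ω) (s + 1)
      = ∑ ζ, D ζ * prefixLR g ζ x s * (1 + g ζ s ((List.ofFn x).take s) ω) := by
  simp only [mixtureLR, prefixLR_update_succ, mul_assoc]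

lemma mixtureLR_succ (x : Fin N → Ω) (s : Fin N) :
    mixtureLR D g x (s + 1)
      = ∑ ζ, D ζ * prefixLR g ζ x s * (1 + g ζ s ((List.ofFn x).take s) (x s)) := by
  simpa using mixtureLR_update_succ g D x s (x s)

lemma mixtureLR_succ_eq_zero (hD0 : ∀ ζ, 0 ≤ D ζ) (hpos : ∀ ζ t xs ω, 0 ≤ 1 + g ζ t xs ω)
    (x : Fin N → Ω) (s : Fin N) (h : mixtureLR D g x s = 0) : mixtureLR D g x (s + 1) = 0 := by
  have hterm := (sum_eq_zero_iff_of_nonneg fun ζ _ =>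
    mul_nonneg (hD0 ζ) (prefixLR_nonneg g hpos ζ x s)).mp h
  rw [mixtureLR_succ]
  exact sum_eq_zero fun ζ hζ => by rw [hterm ζ hζ, zero_mul]

end PrefixLikelihood

section MixtureMartingale

variable {Ω Z : Type*} [Fintype Ω] [Fintype Z] {N : ℕ} (q : Fin N → Ω → ℝ) (D : Z → ℝ)
  (g : Z → Fin N → List Ω → Ω → ℝ)

lemma sum_prod_mul_mixtureLR_succ (hq1 : ∀ t, ∑ ω, q t ω = 1)
    (hmean : ∀ ζ t xs, ∑ ω, q t ω * g ζ t xs ω = 0) (s : Fin N) (f : (Fin N → Ω) → ℝ)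
    (hf : ∀ x ω, f (update x s ω) = f x) :
    ∑ x, (∏ i, q i (x i)) * (mixtureLR D g x (s + 1) * f x)
      = ∑ x, (∏ i, q i (x i)) * (mixtureLR D g x s * f x) := by
  rw [sum_prod_mul_eq_sum_prod_mul_sum_update q (hq1 s)]
  refine sum_congr rfl fun x _ => congrArg _ ?_
  simp only [mixtureLR_update_succ, hf, ← mul_assoc, ← sum_mul]
  rw [sum_mul_sum_mul_one_add _ (hq1 s) fun ζ => hmean ζ s _, mixtureLR]

lemma sum_prod_mul_mixtureLR_of_le (hq1 : ∀ t, ∑ ω, q t ω = 1)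
    (hmean : ∀ ζ t xs, ∑ ω, q t ω * g ζ t xs ω = 0) {t k : ℕ} (htk : t ≤ k) (hkN : k ≤ N)
    (f : (Fin N → Ω) → ℝ) (hf : ∀ x (s : Fin N) ω, t ≤ s → f (update x s ω) = f x) :
    ∑ x, (∏ i, q i (x i)) * (mixtureLR D g x k * f x)
      = ∑ x, (∏ i, q i (x i)) * (mixtureLR D g x t * f x) := by
  induction k, htk using Nat.le_induction with
  | base => rfl
  | succ k htk ih =>
    rw [← ih (by omega)]
    exact sum_prod_mul_mixtureLR_succ q D g hq1 hmean ⟨k, hkN⟩ f fun x ω => hf x _ ω htk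

lemma sum_prod_mul_mixtureLR (hq1 : ∀ t, ∑ ω, q t ω = 1) (hD1 : ∑ ζ, D ζ = 1)
    (hmean : ∀ ζ t xs, ∑ ω, q t ω * g ζ t xs ω = 0) {k : ℕ} (hk : k ≤ N) :
    ∑ x, (∏ i, q i (x i)) * mixtureLR D g x k = 1 := by
  simpa [mixtureLR_zero g D hD1, sum_prod_eq_one q hq1] using
    sum_prod_mul_mixtureLR_of_le q D g hq1 hmean (Nat.zero_le k) hk (fun _ => 1)
      fun _ _ _ _ => rfl

end MixtureMartingale

/-- The pointwise form of `KL ≤ χ²`, from `log y ≤ y - 1`. -/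
lemma mul_log_sub_log_le_sq_div_sub {u v : ℝ} (hu : 0 ≤ u) (hv : 0 ≤ v) (huv : v = 0 → u = 0) :
    u * (Real.log u - Real.log v) ≤ u ^ 2 / v - u := by
  rcases hv.eq_or_lt with rfl | hv
  · simp [huv rfl]
  rcases hu.eq_or_lt with rfl | hu
  · simp
  have hlog := Real.log_le_sub_one_of_pos (div_pos hu hv)
  rw [Real.log_div hu.ne' hv.ne'] at hlog
  calc u * (Real.log u - Real.log v) ≤ u * (u / v - 1) := mul_le_mul_of_nonneg_left hlog hu.le
    _ = u ^ 2 / v - u := by ring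

section ChiSquareBound

variable {Ω Z : Type*} [Fintype Ω] [Fintype Z] {N : ℕ} (q : Fin N → Ω → ℝ) (D : Z → ℝ)
  (g : Z → Fin N → List Ω → Ω → ℝ)

lemma sum_prod_mul_sq_mixtureLR_succ_div (hq1 : ∀ t, ∑ ω, q t ω = 1) (hD1 : ∑ ζ, D ζ = 1)
    (hmean : ∀ ζ t xs, ∑ ω, q t ω * g ζ t xs ω = 0) (t : Fin N) :
    ∑ x, (∏ i, q i (x i)) * (mixtureLR D g x (t + 1) ^ 2 / mixtureLR D g x t)
      = 1 + ∑ x, (∏ i, q i (x i)) * (1 / mixtureLR D g x t) *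
          ∑ ζ, ∑ ζ', D ζ * D ζ' *
            (∑ ω, q t ω * (g ζ t ((List.ofFn x).take t) ω * g ζ' t ((List.ofFn x).take t) ω)) *
            (prefixLR g ζ x t * prefixLR g ζ' x t) := by
  rw [sum_prod_mul_eq_sum_prod_mul_sum_update q (hq1 t)]
  calc _ = ∑ x, ((∏ i, q i (x i)) * mixtureLR D g x t + (∏ i, q i (x i)) *
          (1 / mixtureLR D g x t) * ∑ ζ, ∑ ζ', D ζ * D ζ' *
            (∑ ω, q t ω * (g ζ t ((List.ofFn x).take t) ω * g ζ' t ((List.ofFn x).take t) ω)) *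
            (prefixLR g ζ x t * prefixLR g ζ' x t)) := by
        refine sum_congr rfl fun x _ => ?_
        simp only [mixtureLR_update_succ, mixtureLR_update g D x _ le_rfl, mul_div_assoc',
          ← sum_div]
        rw [sum_mul_sq_sum_mul_one_add _ (hq1 t) fun ζ => hmean ζ t _, ← mixtureLR, mul_div_assoc,
          add_div, sq, mul_self_div_self, mul_add, div_mul_eq_mul_div, mul_one, mul_div_assoc]
        congr 3
        exact sum_congr rfl fun ζ _ => sum_congr rfl fun ζ' _ => by ring
    _ = _ := by rw [sum_add_distrib, sum_prod_mul_mixtureLR q D g hq1 hD1 hmean t.isLt.le]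

lemma sum_prod_mul_mixtureLR_mul_log_sub_le (hq0 : ∀ t ω, 0 ≤ q t ω)
    (hq1 : ∀ t, ∑ ω, q t ω = 1) (hD0 : ∀ ζ, 0 ≤ D ζ) (hD1 : ∑ ζ, D ζ = 1)
    (hmean : ∀ ζ t xs, ∑ ω, q t ω * g ζ t xs ω = 0) (hpos : ∀ ζ t xs ω, 0 ≤ 1 + g ζ t xs ω)
    (t : Fin N) :
    ∑ x, (∏ i, q i (x i)) * (mixtureLR D g x N *
        (Real.log (mixtureLR D g x (t + 1)) - Real.log (mixtureLR D g x t)))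
      ≤ ∑ x, (∏ i, q i (x i)) * (1 / mixtureLR D g x t) *
          ∑ ζ, ∑ ζ', D ζ * D ζ' *
            (∑ ω, q t ω * (g ζ t ((List.ofFn x).take t) ω * g ζ' t ((List.ofFn x).take t) ω)) *
            (prefixLR g ζ x t * prefixLR g ζ' x t) := by
  have hΔ := mixtureLR_nonneg g D hD0 hpos
  calc _ = ∑ x, (∏ i, q i (x i)) * (mixtureLR D g x (t + 1) *
        (Real.log (mixtureLR D g x (t + 1)) - Real.log (mixtureLR D g x t))) :=
        sum_prod_mul_mixtureLR_of_le q D g hq1 hmean t.isLt le_rfl _ fun x s ω hs => by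
          rw [mixtureLR_update g D x ω hs, mixtureLR_update g D x ω (by omega)]
    _ ≤ ∑ x, (∏ i, q i (x i)) *
          (mixtureLR D g x (t + 1) ^ 2 / mixtureLR D g x t - mixtureLR D g x (t + 1)) :=
        sum_le_sum fun x _ => mul_le_mul_of_nonneg_left
          (mul_log_sub_log_le_sq_div_sub (hΔ x _) (hΔ x _)
            (mixtureLR_succ_eq_zero g D hD0 hpos x t))
          (prod_nonneg fun i _ => hq0 i (x i))
    _ = _ := by
        simp only [mul_sub, sum_sub_distrib]
        rw [sum_prod_mul_sq_mixtureLR_succ_div q D g hq1 hD1 hmean t,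
          sum_prod_mul_mixtureLR q D g hq1 hD1 hmean t.isLt, add_sub_cancel_left]

end ChiSquareBound

/-- Chain-rule bound on the KL divergence between the mixture of adaptively
perturbed distributions and the base product distribution:
`KL(P₁‖P₀) ≤ Σ_t E_{x_{<t}~P₀}[(1/Δ(x_{<t}))·E_{ζ,ζ'}[φ^{ζ,ζ'}_{x_{<t}}·Ψ^{ζ,ζ'}_{x_{<t}}]]`.
Transcript prefixes are encoded as lists `(List.ofFn x).take t`. -/
theorem stmt9 {Ω Z : Type*} [Fintype Ω] [Fintype Z] (N : ℕ)
    (q : Fin N → Ω → ℝ) (hq0 : ∀ t x, 0 < q t x) (hq1 : ∀ t, ∑ x, q t x = 1)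
    (D : Z → ℝ) (hD0 : ∀ ζ, 0 ≤ D ζ) (hD1 : ∑ ζ, D ζ = 1)
    (g : Z → Fin N → List Ω → Ω → ℝ)
    (hmean : ∀ ζ t xs, ∑ ω, q t ω * g ζ t xs ω = 0)
    (hpos : ∀ ζ t xs ω, 0 ≤ 1 + g ζ t xs ω) :
    let P₀ : (Fin N → Ω) → ℝ := fun x => ∏ t, q t (x t)
    let lf : Z → (Fin N → Ω) → Fin N → Ω → ℝ :=
      fun ζ x i ω => 1 + g ζ i ((List.ofFn x).take (i : ℕ)) ω
    let Δ : (Fin N → Ω) → ℕ → ℝ := fun x t =>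
      ∑ ζ, D ζ * ∏ i ∈ Finset.univ.filter (fun i : Fin N => (i : ℕ) < t), lf ζ x i (x i)
    let Ψ : Z → Z → (Fin N → Ω) → ℕ → ℝ := fun ζ ζ' x t =>
      ∏ i ∈ Finset.univ.filter (fun i : Fin N => (i : ℕ) < t),
        lf ζ x i (x i) * lf ζ' x i (x i)
    let φ : Z → Z → (Fin N → Ω) → Fin N → ℝ := fun ζ ζ' x t =>
      ∑ ω, q t ω * (g ζ t ((List.ofFn x).take (t : ℕ)) ω * g ζ' t ((List.ofFn x).take (t : ℕ)) ω)
    let P₁ : (Fin N → Ω) → ℝ := fun x => ∑ ζ, D ζ * P₀ x * ∏ i, lf ζ x i (x i)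
    (∑ x, P₁ x * Real.log (P₁ x / P₀ x))
      ≤ ∑ t : Fin N, ∑ x, P₀ x * (1 / Δ x (t : ℕ)) *
          (∑ ζ, ∑ ζ', D ζ * D ζ' * φ ζ ζ' x t * Ψ ζ ζ' x (t : ℕ)) := by
  intro P₀ lf Δ Ψ φ P₁
  have hP₀ : ∀ x, 0 < P₀ x := fun x => prod_pos fun i _ => hq0 i (x i)
  have hP₁ : ∀ x, P₁ x = P₀ x * mixtureLR D g x N := fun x => by
    rw [mixtureLR, mul_sum]
    exact sum_congr rfl fun ζ _ => by rw [prefixLR_of_le g ζ x le_rfl]; ring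
  calc ∑ x, P₁ x * Real.log (P₁ x / P₀ x)
      = ∑ x, P₀ x * (mixtureLR D g x N * Real.log (mixtureLR D g x N)) :=
        sum_congr rfl fun x _ => by rw [hP₁, mul_div_cancel_left₀ _ (hP₀ x).ne', mul_assoc]
    _ = ∑ t : Fin N, ∑ x, P₀ x * (mixtureLR D g x N *
          (Real.log (mixtureLR D g x (t + 1)) - Real.log (mixtureLR D g x t))) := by
        simp only [log_mixtureLR_eq_sum_sub g D hD1, mul_sum]
        exact sum_comm
    _ ≤ _ := sum_le_sum fun t _ =>
        sum_prod_mul_mixtureLR_mul_log_sub_le q D g (fun t ω => (hq0 t ω).le) hq1 hD0 hD1 hmean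
          hpos t
    _ = _ := by simp only [Ψ, prod_mul_distrib]; rfl
end

section
/- Let ε ∈ (0, 1/2], t ≥ 1, d even, and X = ε·X' with X' diagonal having entries ±1 as above. Suppose for each i < t and each possible measurement outcome x_i we are given a trace-one PSD Hermitian matrix M̂_i (possibly depending on earlier outcomes), and define g^U_i = ⟨M̂_i, U†XU⟩ for U ∈ U(d). If E_{U~Haar}[(g^U_i)²] ≤ Cε²/d for all i, then E_{U~Haar}[∏_{i=1}^{t-1}(1 + g^U_i)] ≥ (1 − 2Cε²/d)^{t-1}. -/
/-!
Write `g_i U = Re tr (M_i U†XU)`. Since `ε • 1 ± U†XU = U†(ε • 1 ± X)U` are positive semidefinite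
and `M_i` is a density matrix, `|g_i| ≤ ε ≤ 1/2`. The reversal permutation matrix `S` satisfies
`S†XS = -X`, so `g_i (S U) = -g_i U`, and left invariance of `μ` gives
`E log (1 + g_i) = E log (1 - g_i) = ½ E log (1 - g_i²) ≥ -E g_i² ≥ -Cε²/d`.
Jensen's inequality for `exp` then bounds `E ∏ (1 + g_i) = E exp (∑ log (1 + g_i))` from below by
`exp (-(t-1)Cε²/d) ≥ (1 - 2Cε²/d)^(t-1)`.
-/

open MeasureTheory Matrix ComplexOrder

/-- `U† X U` for a unitary `U`. -/
noncomputable def conjAct (d : ℕ) (X : Matrix (Fin d) (Fin d) ℂ)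
    (U : Matrix.unitaryGroup (Fin d) ℂ) : Matrix (Fin d) (Fin d) ℂ :=
  (U : Matrix (Fin d) (Fin d) ℂ)ᴴ * X * (U : Matrix (Fin d) (Fin d) ℂ)

namespace Matrix

variable {n : Type*}

theorem posSemidef_smul_one_add_diagonal_ofReal [DecidableEq n] {c : ℝ} {r : n → ℝ}
    (h : ∀ i, 0 ≤ c + r i) :
    (c • 1 + diagonal fun i => (r i : ℂ)).PosSemidef := by
  have hdiag :
      c • 1 + diagonal (fun i => (r i : ℂ)) = diagonal fun i => ((c + r i : ℝ) : ℂ) := by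
    ext i j
    rcases eq_or_ne i j with rfl | hij <;> simp [*]
  rw [hdiag, posSemidef_diagonal_iff]
  exact fun i => by exact_mod_cast h i

variable [Fintype n] {𝕜 : Type*} [RCLike 𝕜]

open scoped MatrixOrder in
theorem PosSemidef.trace_mul_nonneg {A B : Matrix n n 𝕜} (hA : A.PosSemidef)
    (hB : B.PosSemidef) : 0 ≤ (A * B).trace := by
  classical
  obtain ⟨C, rfl⟩ := CStarAlgebra.nonneg_iff_eq_star_mul_self.mp hB.nonneg
  rw [star_eq_conjTranspose, ← Matrix.mul_assoc, trace_mul_comm, ← Matrix.mul_assoc]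
  exact (hA.mul_mul_conjTranspose_same C).trace_nonneg

variable [DecidableEq n]

theorem abs_re_trace_mul_le_of_posSemidef {M A : Matrix n n 𝕜} {c : ℝ}
    (hM : M.PosSemidef) (htr : M.trace = 1)
    (hle : (c • 1 - A).PosSemidef) (hge : (c • 1 + A).PosSemidef) :
    |RCLike.re (M * A).trace| ≤ c := by
  have h₁ := RCLike.nonneg_iff.mp (hM.trace_mul_nonneg hle) |>.1
  have h₂ := RCLike.nonneg_iff.mp (hM.trace_mul_nonneg hge) |>.1
  simp only [Matrix.mul_sub, Matrix.mul_add, Matrix.mul_smul, trace_sub, trace_add,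
    trace_smul, htr, map_sub, map_add, RCLike.smul_re, RCLike.one_re, mul_one] at h₁ h₂
  exact abs_le.mpr ⟨by linarith, by linarith⟩

variable {R : Type*} [CommRing R] [StarRing R]

theorem permMatrix_mem_unitaryGroup (σ : Equiv.Perm n) :
    σ.permMatrix R ∈ unitaryGroup n R := by
  rw [mem_unitaryGroup_iff', star_eq_conjTranspose, conjTranspose_permMatrix, ← permMatrix_mul,
    mul_inv_cancel, permMatrix_one]

theorem conjTranspose_permMatrix_mul_diagonal_mul_permMatrix (σ : Equiv.Perm n) (v : n → R) :
    (σ.permMatrix R)ᴴ * diagonal v * σ.permMatrix R = diagonal (v ∘ σ.symm) := by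
  rw [conjTranspose_permMatrix, Equiv.Perm.permMatrix, Equiv.Perm.permMatrix,
    PEquiv.toMatrix_toPEquiv_mul, PEquiv.mul_toMatrix_toPEquiv, submatrix_submatrix]
  exact submatrix_diagonal_equiv v σ.symm

end Matrix

section conjAct

variable {d : ℕ}

theorem conjAct_neg (A : Matrix (Fin d) (Fin d) ℂ) (U : unitaryGroup (Fin d) ℂ) :
    conjAct d (-A) U = -conjAct d A U := by
  simp only [conjAct, Matrix.mul_neg, Matrix.neg_mul]

theorem smul_one_add_conjAct (c : ℝ) (A : Matrix (Fin d) (Fin d) ℂ) (U : unitaryGroup (Fin d) ℂ) :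
    c • 1 + conjAct d A U = conjAct d (c • 1 + A) U := by
  have hU : (U : Matrix (Fin d) (Fin d) ℂ)ᴴ * U = 1 := Unitary.coe_star_mul_self U
  simp only [conjAct, Matrix.mul_add, Matrix.add_mul, Matrix.mul_smul, Matrix.smul_mul,
    Matrix.mul_one, hU]

theorem conjAct_mul (A : Matrix (Fin d) (Fin d) ℂ) (V U : unitaryGroup (Fin d) ℂ) :
    conjAct d A (V * U) = conjAct d (conjAct d A V) U := by
  simp only [conjAct, Submonoid.coe_mul, conjTranspose_mul, Matrix.mul_assoc]

theorem Matrix.PosSemidef.conjAct {A : Matrix (Fin d) (Fin d) ℂ} (hA : A.PosSemidef)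
    (U : unitaryGroup (Fin d) ℂ) : (conjAct d A U).PosSemidef :=
  hA.conjTranspose_mul_mul_same _

@[fun_prop]
theorem continuous_conjAct (A : Matrix (Fin d) (Fin d) ℂ) :
    Continuous (conjAct d A) := by
  unfold conjAct
  fun_prop

theorem abs_re_trace_mul_conjAct_diagonal_le {M : Matrix (Fin d) (Fin d) ℂ} (hM : M.PosSemidef)
    (htr : M.trace = 1) {r : Fin d → ℝ} {c : ℝ} (hr : ∀ i, |r i| ≤ c)
    (U : unitaryGroup (Fin d) ℂ) :
    |(M * conjAct d (diagonal fun i => (r i : ℂ)) U).trace.re| ≤ c := by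
  refine abs_re_trace_mul_le_of_posSemidef (𝕜 := ℂ) hM htr ?_ ?_
  · have hneg : -diagonal (fun i => (r i : ℂ)) = diagonal fun i => ((-r i : ℝ) : ℂ) := by
      simp only [diagonal_neg, Complex.ofReal_neg]
    rw [sub_eq_add_neg, ← conjAct_neg, smul_one_add_conjAct, hneg]
    exact (posSemidef_smul_one_add_diagonal_ofReal fun i => by
      linarith [(abs_le.mp (hr i)).2]).conjAct U
  · rw [smul_one_add_conjAct]
    exact (posSemidef_smul_one_add_diagonal_ofReal fun i => by
      linarith [(abs_le.mp (hr i)).1]).conjAct U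

theorem exists_conjAct_diagonal_halves_eq_neg (hd : 2 ∣ d) (a : ℂ) :
    ∃ S : unitaryGroup (Fin d) ℂ,
      conjAct d (diagonal fun i : Fin d => if (i : ℕ) < d / 2 then a else -a) S =
        -diagonal fun i : Fin d => if (i : ℕ) < d / 2 then a else -a := by
  refine ⟨⟨Fin.revPerm.permMatrix ℂ, permMatrix_mem_unitaryGroup _⟩, ?_⟩
  rw [conjAct, conjTranspose_permMatrix_mul_diagonal_mul_permMatrix, diagonal_neg]
  congr 1
  funext i
  obtain ⟨k, rfl⟩ := hd
  have := i.isLt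
  simp only [Function.comp_apply, Fin.revPerm_symm, Fin.revPerm_apply, Fin.val_rev]
  split_ifs <;> first | omega | simp

end conjAct

open Real

theorem abs_log_one_add_le_one {x : ℝ} (hx : |x| ≤ 1 / 2) : |log (1 + x)| ≤ 1 := by
  obtain ⟨hx₁, hx₂⟩ := abs_le.mp hx
  have hpos : 0 < 1 + x := by linarith
  have hlow := one_sub_inv_le_log_of_pos hpos
  have hinv : (1 + x)⁻¹ ≤ 2 := by rw [inv_le_comm₀ hpos two_pos]; linarith
  exact abs_le.mpr ⟨by linarith, by linarith [log_le_sub_one_of_pos hpos]⟩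

theorem neg_two_mul_le_log_one_sub {y : ℝ} (hy₀ : 0 ≤ y) (hy₁ : y ≤ 1 / 2) :
    -2 * y ≤ log (1 - y) := by
  have hpos : 0 < 1 - y := by linarith
  have hinv : (1 - y)⁻¹ ≤ 2 := by rw [inv_le_comm₀ hpos two_pos]; linarith
  calc -2 * y ≤ -(y * (1 - y)⁻¹) := by nlinarith
    _ = 1 - (1 - y)⁻¹ := by field_simp; ring
    _ ≤ log (1 - y) := one_sub_inv_le_log_of_pos hpos

theorem neg_two_mul_sq_le_log_one_add_add_log_one_sub {x : ℝ} (hx : x ^ 2 ≤ 1 / 2) :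
    -2 * x ^ 2 ≤ log (1 + x) + log (1 - x) := by
  rw [← log_mul (by nlinarith) (by nlinarith), show (1 + x) * (1 - x) = 1 - x ^ 2 by ring]
  exact neg_two_mul_le_log_one_sub (sq_nonneg x) hx

theorem one_sub_two_mul_pow_le_exp_nat_mul_neg {x : ℝ} (hx : 0 ≤ x) (hx2 : 2 * x ≤ 1) (n : ℕ) :
    (1 - 2 * x) ^ n ≤ exp (n * -x) := by
  rw [exp_nat_mul]
  exact pow_le_pow_left₀ (by linarith) (by linarith [add_one_le_exp (-x)]) _

section

variable {Ω : Type*} [MeasurableSpace Ω] {μ : Measure Ω}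

theorem integrable_log_one_add [IsFiniteMeasure μ] {g : Ω → ℝ} (hg : Measurable g)
    (hb : ∀ x, |g x| ≤ 1 / 2) : Integrable (fun x => log (1 + g x)) μ :=
  .of_bound (measurable_log.comp (measurable_const.add hg)).aestronglyMeasurable 1
    (ae_of_all _ fun x => abs_log_one_add_le_one (hb x))

theorem exp_sum_integral_log_one_add_le_integral_prod [IsProbabilityMeasure μ] {ι : Type*}
    [Fintype ι] {g : ι → Ω → ℝ} (hg : ∀ i, Measurable (g i)) (hb : ∀ i x, |g i x| ≤ 1 / 2) :
    exp (∑ i, ∫ x, log (1 + g i x) ∂μ) ≤ ∫ x, ∏ i, (1 + g i x) ∂μ := by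
  have hpos (i : ι) (x : Ω) : 0 < 1 + g i x := by linarith [(abs_le.mp (hb i x)).1]
  have hlog (i : ι) := integrable_log_one_add (μ := μ) (hg i) (hb i)
  have hprod : Integrable (fun x => ∏ i, (1 + g i x)) μ := by
    have hmeas : Measurable fun x => ∏ i, (1 + g i x) :=
      Finset.measurable_prod _ fun i _ => measurable_const.add (hg i)
    refine .of_bound hmeas.aestronglyMeasurable (2 ^ Fintype.card ι) (ae_of_all _ fun x => ?_)
    calc ‖∏ i, (1 + g i x)‖ ≤ ∏ _i : ι, (2 : ℝ) := (Finset.norm_prod_le _ _).trans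
          (Finset.prod_le_prod (fun _ _ => norm_nonneg _) fun i _ => by
            rw [Real.norm_eq_abs, abs_of_pos (hpos i x)]; linarith [(abs_le.mp (hb i x)).2])
      _ = 2 ^ Fintype.card ι := by rw [Finset.prod_const, Finset.card_univ]
  have hexp (x : Ω) : ∏ i, (1 + g i x) = exp (∑ i, log (1 + g i x)) := by
    rw [exp_sum]; exact Finset.prod_congr rfl fun i _ => (exp_log (hpos i x)).symm
  simp_rw [hexp] at hprod ⊢
  rw [← integral_finsetSum _ fun i _ => hlog i]
  exact convexOn_exp.map_integral_le continuousOn_exp isClosed_univ (ae_of_all _ fun _ => trivial)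
    (integrable_finsetSum _ fun i _ => hlog i) hprod

end

theorem neg_integral_sq_le_integral_log_one_add {G : Type*} [Group G] [MeasurableSpace G]
    [MeasurableMul G] {μ : Measure G} [IsFiniteMeasure μ] [μ.IsMulLeftInvariant] {g : G → ℝ}
    (hg : Measurable g) (hb : ∀ x, |g x| ≤ 1 / 2) {s : G} (hs : ∀ x, g (s * x) = -g x) :
    -∫ x, g x ^ 2 ∂μ ≤ ∫ x, log (1 + g x) ∂μ := by
  have hsymm : ∫ x, log (1 - g x) ∂μ = ∫ x, log (1 + g x) ∂μ := by
    simp_rw [← integral_mul_left_eq_self (fun x => log (1 + g x)) s, hs, sub_eq_add_neg]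
  have hsq (x : G) : g x ^ 2 ≤ 1 / 4 := by nlinarith [abs_nonneg (g x), hb x, sq_abs (g x)]
  have hplus := integrable_log_one_add (μ := μ) hg hb
  have hminus : Integrable (fun x => log (1 - g x)) μ := by
    simpa only [sub_eq_add_neg, Pi.neg_apply] using
      integrable_log_one_add (μ := μ) hg.neg fun x => (abs_neg (g x)).trans_le (hb x)
  have hsq_int : Integrable (fun x => g x ^ 2) μ :=
    .of_bound (hg.pow_const 2).aestronglyMeasurable (1 / 4) (ae_of_all _ fun x => by
      rw [Real.norm_eq_abs, abs_of_nonneg (sq_nonneg _)]; exact hsq x)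
  have hsum : ∫ x, -2 * g x ^ 2 ∂μ ≤ ∫ x, (log (1 + g x) + log (1 - g x)) ∂μ :=
    integral_mono (hsq_int.const_mul _) (hplus.add hminus) fun x =>
      neg_two_mul_sq_le_log_one_add_add_log_one_sub ((hsq x).trans (by norm_num))
  rw [integral_const_mul, integral_add hplus hminus, hsymm] at hsum
  linarith

theorem stmt14_general (d t : ℕ) (hd : 2 ∣ d)
    (ε C : ℝ) (hε0 : 0 < ε) (hε1 : ε ≤ 1 / 2) (hC : 0 ≤ C) (hCd : 2 * C * ε ^ 2 ≤ d)
    [MeasurableSpace (Matrix.unitaryGroup (Fin d) ℂ)]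
    [BorelSpace (Matrix.unitaryGroup (Fin d) ℂ)]
    (μ : Measure (Matrix.unitaryGroup (Fin d) ℂ)) [IsProbabilityMeasure μ]
    (hinv : ∀ V : Matrix.unitaryGroup (Fin d) ℂ, μ.map (fun U => V * U) = μ)
    (X : Matrix (Fin d) (Fin d) ℂ)
    (hX : X = Matrix.diagonal fun i : Fin d => if (i : ℕ) < d / 2 then (ε : ℂ) else -(ε : ℂ))
    (M : Fin (t - 1) → Matrix (Fin d) (Fin d) ℂ)
    (hM : ∀ i, (M i).PosSemidef ∧ (M i).trace = 1)
    (hg2 : ∀ i, ∫ U, ((Matrix.trace (M i * conjAct d X U)).re) ^ 2 ∂μ ≤ C * ε ^ 2 / d) :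
    ∫ U, ∏ i, (1 + (Matrix.trace (M i * conjAct d X U)).re) ∂μ
      ≥ (1 - 2 * C * ε ^ 2 / d) ^ (t - 1) := by
  set g : Fin (t - 1) → unitaryGroup (Fin d) ℂ → ℝ := fun i U => (trace (M i * conjAct d X U)).re
  have hX' : X = diagonal fun j : Fin d => ((if (j : ℕ) < d / 2 then ε else -ε : ℝ) : ℂ) := by
    simp only [hX, apply_ite Complex.ofReal, Complex.ofReal_neg]
  have hg_le (i : Fin (t - 1)) (U : unitaryGroup (Fin d) ℂ) : |g i U| ≤ 1 / 2 := by
    refine le_trans ?_ hε1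
    simp only [g, hX']
    exact abs_re_trace_mul_conjAct_diagonal_le (hM i).1 (hM i).2
      (fun j => by split_ifs <;> simp [abs_of_pos hε0]) U
  have hg_meas (i : Fin (t - 1)) : Measurable (g i) := Continuous.measurable (by fun_prop)
  obtain ⟨S, hS⟩ := exists_conjAct_diagonal_halves_eq_neg hd (ε : ℂ)
  rw [← hX] at hS
  have hg_odd (i : Fin (t - 1)) (U : unitaryGroup (Fin d) ℂ) : g i (S * U) = -g i U := by
    simp only [g, conjAct_mul, hS, conjAct_neg, Matrix.mul_neg, trace_neg, Complex.neg_re]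
  have : μ.IsMulLeftInvariant := ⟨hinv⟩
  set x := C * ε ^ 2 / d with hx_def
  have hlog (i : Fin (t - 1)) : -x ≤ ∫ U, log (1 + g i U) ∂μ :=
    (neg_le_neg (hg2 i)).trans <|
      neg_integral_sq_le_integral_log_one_add (hg_meas i) (hg_le i) (hg_odd i)
  have hx : 0 ≤ x := by positivity
  have hx2 : 2 * x ≤ 1 := by
    rw [hx_def, mul_div_assoc', ← mul_assoc]
    exact div_le_one_of_le₀ hCd d.cast_nonneg
  calc (1 - 2 * C * ε ^ 2 / d) ^ (t - 1) = (1 - 2 * x) ^ (t - 1) := by rw [hx_def]; ring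
    _ ≤ exp ((t - 1 : ℕ) * -x) := one_sub_two_mul_pow_le_exp_nat_mul_neg hx hx2 _
    _ ≤ exp (∑ i, ∫ U, log (1 + g i U) ∂μ) :=
        exp_le_exp.mpr (by simpa using Finset.sum_le_sum fun i (_ : i ∈ Finset.univ) => hlog i)
    _ ≤ ∫ U, ∏ i, (1 + g i U) ∂μ := exp_sum_integral_log_one_add_le_integral_prod hg_meas hg_le

/-- If each `g^U_i = ⟨M̂_i, U†XU⟩` satisfies `E_U[(g^U_i)²] ≤ Cε²/d` (with
`2Cε²/d ≤ 1`), then `E_U[∏_{i<t}(1 + g^U_i)] ≥ (1 − 2Cε²/d)^{t−1}` for a Haar-random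
(left-invariant Borel probability) `U ∈ U(d)`;  `X` is `±ε`-diagonal, `ε ≤ 1/2`. -/
theorem stmt14 (d t : ℕ) (hd : 2 ∣ d) (hd2 : 2 ≤ d) (ht : 1 ≤ t)
    (ε C : ℝ) (hε0 : 0 < ε) (hε1 : ε ≤ 1 / 2) (hC : 0 ≤ C) (hCd : 2 * C * ε ^ 2 ≤ d)
    [MeasurableSpace (Matrix.unitaryGroup (Fin d) ℂ)]
    [BorelSpace (Matrix.unitaryGroup (Fin d) ℂ)]
    (μ : Measure (Matrix.unitaryGroup (Fin d) ℂ)) [IsProbabilityMeasure μ]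
    (hinv : ∀ V : Matrix.unitaryGroup (Fin d) ℂ, μ.map (fun U => V * U) = μ)
    (X : Matrix (Fin d) (Fin d) ℂ)
    (hX : X = Matrix.diagonal fun i : Fin d => if (i : ℕ) < d / 2 then (ε : ℂ) else -(ε : ℂ))
    (M : Fin (t - 1) → Matrix (Fin d) (Fin d) ℂ)
    (hM : ∀ i, (M i).PosSemidef ∧ (M i).trace = 1)
    (hg2 : ∀ i, ∫ U, ((Matrix.trace (M i * conjAct d X U)).re) ^ 2 ∂μ ≤ C * ε ^ 2 / d) :
    ∫ U, ∏ i, (1 + (Matrix.trace (M i * conjAct d X U)).re) ∂μ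
      ≥ (1 - 2 * C * ε ^ 2 / d) ^ (t - 1) :=
  stmt14_general d t hd ε C hε0 hε1 hC hCd μ hinv X hX M hM hg2
end

section
/- Let ℓ ≥ 0 be an integer, ε ∈ (0,1), ε' = log((1+ε)/(1−ε)), and define A^{h₁,h₂}, B^{h₁,h₂} as above. If h₁ ~ Binomial(ℓ, 1/2), then E[A^{h₁, ℓ−h₁}] = 1 and E[(B^{h₁,ℓ−h₁})²/A^{h₁,ℓ−h₁}] ≤ ε'²·ℓ. -/
/-! With `a = (1-ε)^h (1+ε)^(ℓ-h)` and `b = (1-ε)^(ℓ-h) (1+ε)^h` we have `A = (a+b)/2` and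
`B = (a-b)/2`, and by the binomial theorem `a` and `b` both have mean `(((1-ε)+(1+ε))/2)^ℓ = 1`.
The product `ab = (1-ε²)^ℓ` does not depend on `h`, so the pointwise bound
`B²/A ≤ a + b - 2√(ab)` gives `E[B²/A] ≤ 2 - 2√((1-ε²)^ℓ) ≤ 2ℓε²` by Bernoulli's inequality,
and `ε' ≥ 2ε` finishes. -/

open Finset Real

theorem sum_choose_div_two_pow_mul_pow (x y : ℝ) (n : ℕ) :
    ∑ k ∈ range (n + 1), (n.choose k : ℝ) / 2 ^ n * (x ^ k * y ^ (n - k)) =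
      ((x + y) / 2) ^ n := by
  rw [div_pow, add_pow, sum_div]
  exact sum_congr rfl fun k _ => by ring

theorem sum_choose_div_two_pow_mul_symm_pow (x y : ℝ) (n : ℕ) :
    ∑ k ∈ range (n + 1),
        (n.choose k : ℝ) / 2 ^ n * ((x ^ k * y ^ (n - k) + x ^ (n - k) * y ^ k) / 2) =
      ((x + y) / 2) ^ n := by
  have hxy := sum_choose_div_two_pow_mul_pow x y n
  have hyx := sum_choose_div_two_pow_mul_pow y x n
  rw [add_comm y x] at hyx
  calc _ = (∑ k ∈ range (n + 1), (n.choose k : ℝ) / 2 ^ n * (x ^ k * y ^ (n - k)) +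
        ∑ k ∈ range (n + 1), (n.choose k : ℝ) / 2 ^ n * (y ^ k * x ^ (n - k))) / 2 := by
        rw [← sum_add_distrib, sum_div]
        exact sum_congr rfl fun k _ => by ring
    _ = ((x + y) / 2) ^ n := by rw [hxy, hyx, add_self_div_two]

theorem pow_mul_pow_sub_mul_pow_sub_mul_pow {M : Type*} [CommMonoid M] (x y : M) {n k : ℕ}
    (hk : k ≤ n) : x ^ k * y ^ (n - k) * (x ^ (n - k) * y ^ k) = (x * y) ^ n := by
  obtain ⟨m, rfl⟩ := Nat.exists_eq_add_of_le hk
  rw [Nat.add_sub_cancel_left, mul_pow, pow_add, pow_add]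
  ac_rfl

/-- With `a = s²`, `b = t²` this is `(s - t)² (s + t)² ≤ 2 (s² + t²) (s - t)²`. -/
theorem sq_half_sub_div_half_add_le {a b : ℝ} (ha : 0 ≤ a) (hb : 0 ≤ b) :
    ((a - b) / 2) ^ 2 / ((a + b) / 2) ≤ a + b - 2 * √(a * b) := by
  obtain ⟨s, hs, rfl⟩ : ∃ s, 0 ≤ s ∧ s ^ 2 = a := ⟨√a, sqrt_nonneg a, sq_sqrt ha⟩
  obtain ⟨t, ht, rfl⟩ : ∃ t, 0 ≤ t ∧ t ^ 2 = b := ⟨√b, sqrt_nonneg b, sq_sqrt hb⟩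
  rw [← mul_pow, sqrt_sq (mul_nonneg hs ht)]
  rcases (add_nonneg (sq_nonneg s) (sq_nonneg t)).eq_or_lt with h | h
  · rw [← h]; simp only [zero_div, div_zero]; nlinarith [sq_nonneg (s - t)]
  · rw [div_le_iff₀ (by positivity)]
    nlinarith [sq_nonneg (s - t), sq_nonneg (s + t), mul_nonneg hs ht]

theorem two_mul_le_log_one_add_div_one_sub {x : ℝ} (hx0 : 0 ≤ x) (hx1 : x < 1) :
    2 * x ≤ log ((1 + x) / (1 - x)) := by
  rw [log_div (by linarith) (by linarith)]
  have hsum := hasSum_log_sub_log_of_abs_lt_one (abs_lt.mpr ⟨by linarith, hx1⟩)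
  simpa using sum_le_hasSum (range 1) (fun k _ => by positivity) hsum

theorem one_sub_nat_mul_le_sqrt_one_sub_pow {t : ℝ} (ht0 : 0 ≤ t) (ht1 : t ≤ 1) (n : ℕ) :
    1 - n * t ≤ √((1 - t) ^ n) := calc
  1 - n * t ≤ (1 - t) ^ n := by
    simpa [sub_eq_add_neg] using one_add_mul_le_pow (by linarith : (-2 : ℝ) ≤ -t) n
  _ ≤ √((1 - t) ^ n) := le_sqrt_self_iff.mpr (pow_le_one₀ (by linarith) (by linarith))

/-- For `h₁ ~ Binomial(ℓ, 1/2)`: `E[A^{h₁,ℓ−h₁}] = 1` and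
`E[(B^{h₁,ℓ−h₁})²/A^{h₁,ℓ−h₁}] ≤ ε'²·ℓ`, where `ε' = log((1+ε)/(1−ε))`. -/
theorem stmt16 (ℓ : ℕ) (ε : ℝ) (hε0 : 0 < ε) (hε1 : ε < 1) :
    let ε' : ℝ := Real.log ((1 + ε) / (1 - ε))
    let A : ℕ → ℕ → ℝ := fun h₁ h₂ =>
      ((1 - ε) ^ h₁ * (1 + ε) ^ h₂ + (1 - ε) ^ h₂ * (1 + ε) ^ h₁) / 2
    let B : ℕ → ℕ → ℝ := fun h₁ h₂ =>
      ((1 - ε) ^ h₁ * (1 + ε) ^ h₂ - (1 - ε) ^ h₂ * (1 + ε) ^ h₁) / 2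
    (∑ k ∈ Finset.range (ℓ + 1), (ℓ.choose k : ℝ) / 2 ^ ℓ * A k (ℓ - k)) = 1 ∧
      (∑ k ∈ Finset.range (ℓ + 1), (ℓ.choose k : ℝ) / 2 ^ ℓ *
          ((B k (ℓ - k)) ^ 2 / A k (ℓ - k))) ≤ ε' ^ 2 * ℓ := by
  intro ε' A B
  have hmean : ∑ k ∈ range (ℓ + 1), (ℓ.choose k : ℝ) / 2 ^ ℓ * A k (ℓ - k) = 1 := by
    simpa using sum_choose_div_two_pow_mul_symm_pow (1 - ε) (1 + ε) ℓ
  have hprob : ∑ k ∈ range (ℓ + 1), (ℓ.choose k : ℝ) / 2 ^ ℓ = 1 := by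
    simpa using sum_choose_div_two_pow_mul_pow 1 1 ℓ
  set c := √((1 - ε ^ 2) ^ ℓ)
  have hpointwise (k : ℕ) (hk : k ∈ range (ℓ + 1)) :
      B k (ℓ - k) ^ 2 / A k (ℓ - k) ≤ 2 * A k (ℓ - k) - 2 * c := by
    have hc : c = √((1 - ε) ^ k * (1 + ε) ^ (ℓ - k) * ((1 - ε) ^ (ℓ - k) * (1 + ε) ^ k)) := by
      rw [pow_mul_pow_sub_mul_pow_sub_mul_pow _ _ (Nat.lt_succ_iff.mp (mem_range.mp hk)),
        mul_comm (1 - ε), ← sq_sub_sq, one_pow]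
    rw [hc, mul_div_cancel₀ _ two_ne_zero]
    exact sq_half_sub_div_half_add_le (by positivity) (by positivity)
  refine ⟨hmean, ?_⟩
  calc ∑ k ∈ range (ℓ + 1), (ℓ.choose k : ℝ) / 2 ^ ℓ * (B k (ℓ - k) ^ 2 / A k (ℓ - k))
      ≤ ∑ k ∈ range (ℓ + 1), (ℓ.choose k : ℝ) / 2 ^ ℓ * (2 * A k (ℓ - k) - 2 * c) :=
        sum_le_sum fun k hk => mul_le_mul_of_nonneg_left (hpointwise k hk) (by positivity)
    _ = 2 - 2 * c := by
        simp only [mul_sub, sum_sub_distrib, mul_left_comm _ (2 : ℝ), ← mul_sum, ← sum_mul,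
          hmean, hprob, mul_one, one_mul]
    _ ≤ 2 * (ℓ * ε ^ 2) := by
        linarith [one_sub_nat_mul_le_sqrt_one_sub_pow (sq_nonneg ε) (by nlinarith) ℓ]
    _ ≤ ε' ^ 2 * ℓ := by
        have hε' : 2 * ε ≤ ε' := two_mul_le_log_one_add_div_one_sub hε0.le hε1
        nlinarith [pow_le_pow_left₀ (by positivity) hε' 2, Nat.cast_nonneg (α := ℝ) ℓ]
end
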